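/- arXiv:2509.25584 — 2 statements merged into one kernel-verified Lean document; each statement's English description precedes it below -/
import Mathlib

section
/- Under the hypotheses of the functional redundancy theorem, if additionally f*_ℓ(x) = E[Z|X_ℓ = x], f*_{ℓ−1}(x) = E[Z|X_{ℓ−1} = x], and f̂_ℓ, f̂_{ℓ−1} are arbitrary estimators with errors η_ℓ = E[‖f̂_ℓ(X_ℓ) − f*_ℓ(X_ℓ)‖²] and η_{ℓ−1} = E[‖f̂_{ℓ−1}(X_{ℓ−1}) − f*_{ℓ−1}(X_{ℓ−1})‖²], then E[‖f̂_ℓ(X_ℓ) − f̂_{ℓ−1}(X_{ℓ−1})‖²] < 3η_ℓ + 3η_{ℓ−1} + 6(α² + β²)ε. -/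
/-!
Write `W = h(X_ℓ, X_{ℓ-1}) = E[Z | X_ℓ, X_{ℓ-1}]`; by the tower property `f*_ℓ(X_ℓ) = E[W | X_ℓ]`
and `f*_{ℓ-1}(X_{ℓ-1}) = E[W | X_{ℓ-1}]`. Conditional expectation is the best `L²` predictor, so
`E[W | X_ℓ]` is at least as close to `W` as the competitor `h(X_ℓ, X_ℓ)`, which differs from `W` by
at most `β‖X_ℓ - X_{ℓ-1}‖`; symmetrically with `h(X_{ℓ-1}, X_{ℓ-1})` and `α`. For unit vectors
`‖X_ℓ - X_{ℓ-1}‖² = 2(1 - ⟨X_ℓ, X_{ℓ-1}⟩)`, whose mean is below `ε`, so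
`E[(f*_ℓ(X_ℓ) - f*_{ℓ-1}(X_{ℓ-1}))²] < 2(α² + β²)ε`. The claim follows from
`(a - d)² ≤ 3(a - b)² + 3(b - c)² + 3(c - d)²`.
-/

open MeasureTheory ProbabilityTheory

noncomputable def ce {Ω γ F : Type*} [MeasureSpace Ω] [MeasurableSpace γ]
    [NormedAddCommGroup F] [NormedSpace ℝ F] [CompleteSpace F]
    (X : Ω → γ) (f : Ω → F) : Ω → F :=
  MeasureTheory.condExp (MeasurableSpace.comap X inferInstance) ℙ f

section L2

variable {Ω : Type*} {m m₀ : MeasurableSpace Ω} {μ : Measure Ω}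

theorem integral_sq_sub_condExp_le [IsFiniteMeasure μ] (hm : m ≤ m₀) {W g : Ω → ℝ}
    (hW : MemLp W 2 μ) (hg : MemLp g 2 μ) (hgm : StronglyMeasurable[m] g) :
    ∫ ω, (W ω - (μ[W|m]) ω) ^ 2 ∂μ ≤ ∫ ω, (W ω - g ω) ^ 2 ∂μ := by
  have hres : (W - g - μ[W - g|m]) ^ 2 =ᵐ[μ] fun ω => (W ω - (μ[W|m]) ω) ^ 2 := by
    filter_upwards [condExp_sub (hW.integrable one_le_two) (hg.integrable one_le_two) m] with ω hω
    rw [Pi.pow_apply, Pi.sub_apply, hω,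
      condExp_of_stronglyMeasurable hm hgm (hg.integrable one_le_two)]
    simp only [Pi.sub_apply, sub_sub_sub_cancel_right]
  calc ∫ ω, (W ω - (μ[W|m]) ω) ^ 2 ∂μ = ∫ ω, Var[W - g; μ | m] ω ∂μ := by
        rw [condVar, integral_condExp hm, integral_congr_ae hres]
    _ ≤ ∫ ω, (μ[(W - g) ^ 2|m]) ω ∂μ :=
        integral_mono_ae integrable_condVar integrable_condExp
          (condVar_ae_le_condExp_sq hm (hW.sub hg))
    _ = ∫ ω, (W ω - g ω) ^ 2 ∂μ := integral_condExp hm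

theorem integral_sq_le_mul_integral_sq_of_abs_le {u v : Ω → ℝ} {c : ℝ}
    (hv : Integrable (fun ω => v ω ^ 2) μ) (huv : ∀ᵐ ω ∂μ, |u ω| ≤ c * v ω) :
    ∫ ω, u ω ^ 2 ∂μ ≤ c ^ 2 * ∫ ω, v ω ^ 2 ∂μ := by
  rw [← integral_const_mul]
  refine integral_mono_of_nonneg (ae_of_all _ fun ω => sq_nonneg _) (hv.const_mul _) ?_
  filter_upwards [huv] with ω hω
  rw [← sq_abs, ← mul_pow]
  exact pow_le_pow_left₀ (abs_nonneg _) hω 2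

theorem integral_sq_sub_le_two_mul {f g k : Ω → ℝ} (hf : MemLp f 2 μ) (hg : MemLp g 2 μ)
    (hk : MemLp k 2 μ) :
    ∫ ω, (f ω - k ω) ^ 2 ∂μ ≤ 2 * ∫ ω, (f ω - g ω) ^ 2 ∂μ + 2 * ∫ ω, (g ω - k ω) ^ 2 ∂μ := by
  have hfg : Integrable (fun ω => 2 * (f ω - g ω) ^ 2) μ := (hf.sub hg).integrable_sq.const_mul 2
  have hgk : Integrable (fun ω => 2 * (g ω - k ω) ^ 2) μ := (hg.sub hk).integrable_sq.const_mul 2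
  rw [← integral_const_mul, ← integral_const_mul, ← integral_add hfg hgk]
  refine integral_mono (hf.sub hk).integrable_sq (hfg.add hgk) fun ω => ?_
  nlinarith [sq_nonneg (f ω - 2 * g ω + k ω)]

theorem integral_sq_sub_le_three_mul {f g k l : Ω → ℝ} (hf : MemLp f 2 μ) (hg : MemLp g 2 μ)
    (hk : MemLp k 2 μ) (hl : MemLp l 2 μ) :
    ∫ ω, (f ω - l ω) ^ 2 ∂μ ≤ 3 * ∫ ω, (f ω - g ω) ^ 2 ∂μ + 3 * ∫ ω, (g ω - k ω) ^ 2 ∂μ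
      + 3 * ∫ ω, (k ω - l ω) ^ 2 ∂μ := by
  have hfg : Integrable (fun ω => 3 * (f ω - g ω) ^ 2) μ := (hf.sub hg).integrable_sq.const_mul 3
  have hgk : Integrable (fun ω => 3 * (g ω - k ω) ^ 2) μ := (hg.sub hk).integrable_sq.const_mul 3
  have hkl : Integrable (fun ω => 3 * (k ω - l ω) ^ 2) μ := (hk.sub hl).integrable_sq.const_mul 3
  have hfgk : Integrable (fun ω => 3 * (f ω - g ω) ^ 2 + 3 * (g ω - k ω) ^ 2) μ := hfg.add hgk
  rw [← integral_const_mul, ← integral_const_mul, ← integral_const_mul, ← integral_add hfg hgk,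
    ← integral_add hfgk hkl]
  refine integral_mono (hf.sub hl).integrable_sq (hfgk.add hkl) fun ω => ?_
  nlinarith [sq_nonneg (f ω - 2 * g ω + k ω), sq_nonneg (g ω - 2 * k ω + l ω),
    sq_nonneg (f ω - g ω - k ω + l ω)]

end L2

section Lipschitz

variable {E : Type*} [NormedAddCommGroup E] {h : E → E → ℝ} {α β : ℝ}

theorem continuous_uncurry_of_abs_sub_le (hLip1 : ∀ x x' y, |h x y - h x' y| ≤ α * ‖x - x'‖)
    (hLip2 : ∀ x y y', |h x y - h x y'| ≤ β * ‖y - y'‖) : Continuous (Function.uncurry h) :=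
  continuous_prod_of_continuous_lipschitzWith _ α.toNNReal
    (fun x => (LipschitzWith.of_dist_le' (K := β) fun y y' => by
      simpa only [dist_eq_norm, Function.uncurry_apply_pair, Real.norm_eq_abs]
        using hLip2 x y y').continuous)
    (fun y => LipschitzWith.of_dist_le' fun x x' => by
      simpa only [dist_eq_norm, Function.uncurry_apply_pair, Real.norm_eq_abs]
        using hLip1 x x' y)

theorem abs_le_of_abs_sub_le (hLip1 : ∀ x x' y, |h x y - h x' y| ≤ α * ‖x - x'‖)
    (hLip2 : ∀ x y y', |h x y - h x y'| ≤ β * ‖y - y'‖) (x y : E) :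
    |h x y| ≤ |h 0 0| + α * ‖x‖ + β * ‖y‖ := by
  have h1 := hLip1 x 0 y
  have h2 := hLip2 0 y 0
  rw [sub_zero] at h1 h2
  calc |h x y| = |(h x y - h 0 y) + (h 0 y - h 0 0) + h 0 0| := by ring_nf
    _ ≤ |h x y - h 0 y| + |h 0 y - h 0 0| + |h 0 0| := abs_add_three _ _ _
    _ ≤ |h 0 0| + α * ‖x‖ + β * ‖y‖ := by linarith

variable {Ω : Type*} {m₀ : MeasurableSpace Ω} {μ : Measure Ω}

theorem memLp_of_abs_sub_le [IsFiniteMeasure μ] {p : ENNReal}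
    (hLip1 : ∀ x x' y, |h x y - h x' y| ≤ α * ‖x - x'‖)
    (hLip2 : ∀ x y y', |h x y - h x y'| ≤ β * ‖y - y'‖) {U V : Ω → E} (hU : MemLp U p μ)
    (hV : MemLp V p μ) : MemLp (fun ω => h (U ω) (V ω)) p μ := by
  have hmajor := ((memLp_const (|h 0 0|)).add (hU.norm.const_mul α)).add (hV.norm.const_mul β)
  refine hmajor.of_le ((continuous_uncurry_of_abs_sub_le hLip1 hLip2).comp_aestronglyMeasurable
    (hU.1.prodMk hV.1)) (ae_of_all _ fun ω => ?_)
  simp only [Pi.add_apply, Real.norm_eq_abs]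
  exact (abs_le_of_abs_sub_le hLip1 hLip2 _ _).trans (le_abs_self _)

theorem integral_sq_condExp_comap_sub_le [IsFiniteMeasure μ] [MeasurableSpace E]
    [OpensMeasurableSpace E] (hLip1 : ∀ x x' y, |h x y - h x' y| ≤ α * ‖x - x'‖)
    (hLip2 : ∀ x y y', |h x y - h x y'| ≤ β * ‖y - y'‖) {X Y : Ω → E} (hXm : Measurable X)
    (hYm : Measurable Y) (hX : MemLp X 2 μ) (hY : MemLp Y 2 μ) :
    ∫ ω, ((μ[fun ω => h (X ω) (Y ω) | MeasurableSpace.comap X inferInstance]) ω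
        - (μ[fun ω => h (X ω) (Y ω) | MeasurableSpace.comap Y inferInstance]) ω) ^ 2 ∂μ
      ≤ 2 * (α ^ 2 + β ^ 2) * ∫ ω, ‖X ω - Y ω‖ ^ 2 ∂μ := by
  set W : Ω → ℝ := fun ω => h (X ω) (Y ω)
  have hW : MemLp W 2 μ := memLp_of_abs_sub_le hLip1 hLip2 hX hY
  have hXY : Integrable (fun ω => ‖X ω - Y ω‖ ^ 2) μ :=
    (hX.sub hY).integrable_norm_pow two_ne_zero
  have hdiag : Continuous fun x => h x x :=
    (continuous_uncurry_of_abs_sub_le hLip1 hLip2).comp (continuous_id.prodMk continuous_id)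
  have hproj {V : Ω → E} (hVm : Measurable V) (hV : MemLp V 2 μ) {c : ℝ}
      (hc : ∀ ω, |W ω - h (V ω) (V ω)| ≤ c * ‖X ω - Y ω‖) :
      ∫ ω, (W ω - (μ[W | MeasurableSpace.comap V inferInstance]) ω) ^ 2 ∂μ
        ≤ c ^ 2 * ∫ ω, ‖X ω - Y ω‖ ^ 2 ∂μ :=
    (integral_sq_sub_condExp_le hVm.comap_le hW (memLp_of_abs_sub_le hLip1 hLip2 hV hV)
      (hdiag.measurable.comp (comap_measurable V)).stronglyMeasurable).trans
      (integral_sq_le_mul_integral_sq_of_abs_le hXY (ae_of_all _ hc))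
  have hprojX := hproj hXm hX (c := β) fun ω => by
    simpa only [norm_sub_rev] using hLip2 (X ω) (Y ω) (X ω)
  have hprojY := hproj hYm hY (c := α) fun ω => hLip1 (X ω) (Y ω) (Y ω)
  calc _ ≤ 2 * ∫ ω, ((μ[W | MeasurableSpace.comap X inferInstance]) ω - W ω) ^ 2 ∂μ
        + 2 * ∫ ω, (W ω - (μ[W | MeasurableSpace.comap Y inferInstance]) ω) ^ 2 ∂μ :=
        integral_sq_sub_le_two_mul (hW.condExp one_le_two) hW (hW.condExp one_le_two)
    _ ≤ 2 * (β ^ 2 * ∫ ω, ‖X ω - Y ω‖ ^ 2 ∂μ) + 2 * (α ^ 2 * ∫ ω, ‖X ω - Y ω‖ ^ 2 ∂μ) := by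
        simp only [sub_sq_comm ((μ[W | _]) _)] at hprojX ⊢
        gcongr
    _ = 2 * (α ^ 2 + β ^ 2) * ∫ ω, ‖X ω - Y ω‖ ^ 2 ∂μ := by ring

end Lipschitz

theorem integral_norm_sub_sq_eq_of_norm_eq_one {Ω : Type*} {m₀ : MeasurableSpace Ω}
    {μ : Measure Ω} {E : Type*} [NormedAddCommGroup E] [InnerProductSpace ℝ E] {X Y : Ω → E}
    (hX1 : ∀ᵐ ω ∂μ, ‖X ω‖ = 1) (hY1 : ∀ᵐ ω ∂μ, ‖Y ω‖ = 1) :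
    ∫ ω, ‖X ω - Y ω‖ ^ 2 ∂μ = 2 * ∫ ω, (1 - (inner ℝ (X ω) (Y ω) : ℝ)) ∂μ := by
  rw [← integral_const_mul]
  refine integral_congr_ae ?_
  filter_upwards [hX1, hY1] with ω hx hy
  rw [norm_sub_sq_real, hx, hy]
  ring

/-- `X` is `X_ℓ`, `Y` is `X_{ℓ-1}`; `fstarX`/`fstarY` are the optimal estimators, given through
their compositions with `X`/`Y` being versions of the conditional expectations. -/
theorem stmt_7_general {Ω : Type*} [MeasureSpace Ω] [IsProbabilityMeasure (ℙ : Measure Ω)]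
    {d : ℕ} (X Y : Ω → EuclideanSpace ℝ (Fin d))
    (hXm : Measurable X) (hYm : Measurable Y)
    (hX1 : ∀ᵐ ω ∂ℙ, ‖X ω‖ = 1) (hY1 : ∀ᵐ ω ∂ℙ, ‖Y ω‖ = 1)
    (Z : Ω → ℝ)
    (h : EuclideanSpace ℝ (Fin d) → EuclideanSpace ℝ (Fin d) → ℝ)
    (α β ε : ℝ) (hα : 0 < α)
    (hLip1 : ∀ x x' y, |h x y - h x' y| ≤ α * ‖x - x'‖)
    (hLip2 : ∀ x y y', |h x y - h x y'| ≤ β * ‖y - y'‖)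
    (hcond : (fun ω => h (X ω) (Y ω)) =ᵐ[ℙ] ce (fun ω => (X ω, Y ω)) Z)
    (hcos : ∫ ω, (1 - (inner ℝ (X ω) (Y ω) : ℝ)) ∂ℙ < ε / 2)
    (fstarX fstarY fhatX fhatY : EuclideanSpace ℝ (Fin d) → ℝ)
    (hfstarX : (fun ω => fstarX (X ω)) =ᵐ[ℙ] ce X Z)
    (hfstarY : (fun ω => fstarY (Y ω)) =ᵐ[ℙ] ce Y Z)
    (hfhatX : MemLp (fun ω => fhatX (X ω)) 2 ℙ)
    (hfhatY : MemLp (fun ω => fhatY (Y ω)) 2 ℙ)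
    (ηX ηY : ℝ)
    (hηX : ηX = ∫ ω, (fhatX (X ω) - fstarX (X ω)) ^ 2 ∂ℙ)
    (hηY : ηY = ∫ ω, (fhatY (Y ω) - fstarY (Y ω)) ^ 2 ∂ℙ) :
    ∫ ω, (fhatX (X ω) - fhatY (Y ω)) ^ 2 ∂ℙ
      < 3 * ηX + 3 * ηY + 6 * (α ^ 2 + β ^ 2) * ε := by
  set W : Ω → ℝ := fun ω => h (X ω) (Y ω)
  have hmXY := (hXm.prodMk hYm).comap_le
  have hstarX : (fun ω => fstarX (X ω)) =ᵐ[ℙ] ℙ[W | MeasurableSpace.comap X inferInstance] :=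
    hfstarX.trans ((condExp_congr_ae hcond).trans (condExp_condExp_of_le
      (measurable_fst.comp (comap_measurable _)).comap_le hmXY)).symm
  have hstarY : (fun ω => fstarY (Y ω)) =ᵐ[ℙ] ℙ[W | MeasurableSpace.comap Y inferInstance] :=
    hfstarY.trans ((condExp_congr_ae hcond).trans (condExp_condExp_of_le
      (measurable_snd.comp (comap_measurable _)).comap_le hmXY)).symm
  have hX : MemLp X 2 ℙ := .of_bound hXm.aestronglyMeasurable 1 (hX1.mono fun _ hx => hx.le)
  have hY : MemLp Y 2 ℙ := .of_bound hYm.aestronglyMeasurable 1 (hY1.mono fun _ hy => hy.le)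
  have hW : MemLp W 2 ℙ := memLp_of_abs_sub_le hLip1 hLip2 hX hY
  have hfstarX2 : MemLp (fun ω => fstarX (X ω)) 2 ℙ := (hW.condExp one_le_two).ae_eq hstarX.symm
  have hfstarY2 : MemLp (fun ω => fstarY (Y ω)) 2 ℙ := (hW.condExp one_le_two).ae_eq hstarY.symm
  have hdist : ∫ ω, ‖X ω - Y ω‖ ^ 2 ∂ℙ < ε := by
    rw [integral_norm_sub_sq_eq_of_norm_eq_one hX1 hY1]; linarith
  have hmid : ∫ ω, (fstarX (X ω) - fstarY (Y ω)) ^ 2 ∂ℙ < 2 * (α ^ 2 + β ^ 2) * ε :=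
    calc _ = ∫ ω, ((ℙ[W | MeasurableSpace.comap X inferInstance]) ω
            - (ℙ[W | MeasurableSpace.comap Y inferInstance]) ω) ^ 2 ∂ℙ :=
          integral_congr_ae (by filter_upwards [hstarX, hstarY] with ω hωX hωY; rw [hωX, hωY])
      _ ≤ 2 * (α ^ 2 + β ^ 2) * ∫ ω, ‖X ω - Y ω‖ ^ 2 ∂ℙ :=
          integral_sq_condExp_comap_sub_le hLip1 hLip2 hXm hYm hX hY
      _ < 2 * (α ^ 2 + β ^ 2) * ε := by gcongr
  calc _ ≤ 3 * ηX + 3 * ∫ ω, (fstarX (X ω) - fstarY (Y ω)) ^ 2 ∂ℙ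
        + 3 * ∫ ω, (fstarY (Y ω) - fhatY (Y ω)) ^ 2 ∂ℙ := by
        rw [hηX]; exact integral_sq_sub_le_three_mul hfhatX hfstarX2 hfstarY2 hfhatY
    _ < 3 * ηX + 3 * ηY + 6 * (α ^ 2 + β ^ 2) * ε := by
        simp only [hηY, sub_sq_comm (fstarY _)]; linarith

/-- Functional redundancy for finite-sample estimators (Theorem 2). `X` is `X_ℓ`, `Y` is
`X_{ℓ-1}`; `fstarX`/`fstarY` are the optimal estimators `x ↦ E[Z | X_ℓ = x]` and
`x ↦ E[Z | X_{ℓ-1} = x]` (i.e. their compositions with `X`/`Y` are versions of the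
conditional expectations), and `fhatX`/`fhatY` are arbitrary finite-sample estimators. -/
theorem stmt_7 {Ω : Type*} [MeasureSpace Ω] [IsProbabilityMeasure (ℙ : Measure Ω)]
    {d : ℕ} (X Y : Ω → EuclideanSpace ℝ (Fin d))
    (hXm : Measurable X) (hYm : Measurable Y)
    (hX1 : ∀ᵐ ω ∂ℙ, ‖X ω‖ = 1) (hY1 : ∀ᵐ ω ∂ℙ, ‖Y ω‖ = 1)
    (Z : Ω → ℝ) (hZ : MemLp Z 2 ℙ)
    (h : EuclideanSpace ℝ (Fin d) → EuclideanSpace ℝ (Fin d) → ℝ)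
    (α β ε : ℝ) (hα : 0 < α) (hβ : 0 < β) (hε : 0 < ε)
    (hLip1 : ∀ x x' y, |h x y - h x' y| ≤ α * ‖x - x'‖)
    (hLip2 : ∀ x y y', |h x y - h x y'| ≤ β * ‖y - y'‖)
    (hcond : (fun ω => h (X ω) (Y ω)) =ᵐ[ℙ] ce (fun ω => (X ω, Y ω)) Z)
    (hcos : ∫ ω, (1 - (inner ℝ (X ω) (Y ω) : ℝ)) ∂ℙ < ε / 2)
    (fstarX fstarY fhatX fhatY : EuclideanSpace ℝ (Fin d) → ℝ)
    (hfstarX : (fun ω => fstarX (X ω)) =ᵐ[ℙ] ce X Z)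
    (hfstarY : (fun ω => fstarY (Y ω)) =ᵐ[ℙ] ce Y Z)
    (hfhatX : MemLp (fun ω => fhatX (X ω)) 2 ℙ)
    (hfhatY : MemLp (fun ω => fhatY (Y ω)) 2 ℙ)
    (ηX ηY : ℝ)
    (hηX : ηX = ∫ ω, (fhatX (X ω) - fstarX (X ω)) ^ 2 ∂ℙ)
    (hηY : ηY = ∫ ω, (fhatY (Y ω) - fstarY (Y ω)) ^ 2 ∂ℙ) :
    ∫ ω, (fhatX (X ω) - fhatY (Y ω)) ^ 2 ∂ℙ
      < 3 * ηX + 3 * ηY + 6 * (α ^ 2 + β ^ 2) * ε :=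
  stmt_7_general X Y hXm hYm hX1 hY1 Z h α β ε hα hLip1 hLip2 hcond hcos fstarX fstarY fhatX fhatY
    hfstarX hfstarY hfhatX hfhatY ηX ηY hηX hηY
end

section
/- Suppose X_{ℓ−1}, X_ℓ are discrete random variables, Z ∈ ℝ^d satisfies ‖Z‖₂ ≤ B almost surely, X_{ℓ−1} — X_ℓ — Z is a Markov chain, and h(x,y) = E[Z | X_ℓ = x, X_{ℓ−1} = y] exists. If H(X_ℓ | X_{ℓ−1}) < ε, then E[‖E[Z|X_ℓ] − E[Z|X_{ℓ−1}]‖₂²] < 2B²ε, i.e., informational ε-redundancy implies functional (2B²ε)-redundancy. -/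
/-!
For discrete `X`, the conditional expectation `E[Z | X]` is `g(X)` with `g b = E[Z | X = b]`.
The Markov property makes `E[Z | X_{ℓ-1} = a]` the convex combination `∑_b q(b|a) E[Z | X_ℓ = b]`,
where `q(b|a) = P(X_ℓ = b | X_{ℓ-1} = a)`. As all these means have norm at most `B`, the distance
from `E[Z | X_ℓ = b]` to that combination is at most `2B(1 - q(b|a))`, and the two-point Pinsker
inequality `2(1 - q)² ≤ -log q` bounds `P(a, b)·4B²(1 - q(b|a))²` by `2B²·P(a, b)·log(1 / q(b|a))`.
Summing over `(a, b)` gives `2B²·H(X_ℓ | X_{ℓ-1})`.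
-/

open MeasureTheory ProbabilityTheory

theorem two_mul_one_sub_sq_le_neg_log {q : ℝ} (hq0 : 0 < q) (hq1 : q ≤ 1) :
    2 * (1 - q) ^ 2 ≤ -Real.log q := by
  set f : ℝ → ℝ := fun x => -Real.log x - 2 * (1 - x) ^ 2
  have hderiv : ∀ x ∈ Set.Ioi (0 : ℝ), HasDerivAt f (-(2 * x - 1) ^ 2 / x) x := fun x hx => by
    have hx : x ≠ 0 := ne_of_gt hx
    refine ((Real.hasDerivAt_log hx).neg.sub
      ((((hasDerivAt_id x).const_sub 1).pow 2).const_mul 2)).congr_deriv ?_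
    simp only [id]
    field_simp
    ring
  have hanti : AntitoneOn f (Set.Ioi 0) := by
    refine antitoneOn_of_deriv_nonpos (convex_Ioi 0)
      (fun x hx => (hderiv x hx).continuousAt.continuousWithinAt) (fun x hx => ?_) fun x hx => ?_
    all_goals rw [interior_Ioi] at hx
    · exact (hderiv x hx).differentiableAt.differentiableWithinAt
    · rw [(hderiv x hx).deriv]
      exact div_nonpos_of_nonpos_of_nonneg (neg_nonpos.2 (sq_nonneg _)) (le_of_lt hx)
  have := hanti hq0 (Set.mem_Ioi.2 one_pos) hq1
  simp only [f, Real.log_one, sub_self] at this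
  linarith

section WeightedMean

variable {T E : Type*} [Fintype T] [NormedAddCommGroup E] [NormedSpace ℝ E]
  {w : T → ℝ} {v : T → E} {m : E} {B : ℝ}

theorem sum_mul_norm_sub_le (hw : ∀ b, 0 ≤ w b) (hv : ∀ b, ‖v b‖ ≤ B)
    (hm : (∑ b, w b) • m = ∑ b, w b • v b) (b : T) :
    (∑ b, w b) * ‖v b - m‖ ≤ 2 * B * (∑ b, w b - w b) := by
  classical
  have hdiff : ∀ b', ‖v b - v b'‖ ≤ 2 * B := fun b' =>
    (norm_sub_le _ _).trans (by linarith [hv b, hv b'])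
  calc (∑ b, w b) * ‖v b - m‖ = ‖∑ b', w b' • (v b - v b')‖ := by
        rw [← abs_of_nonneg (Finset.sum_nonneg fun b _ => hw b), ← Real.norm_eq_abs, ← norm_smul,
          smul_sub, hm, Finset.sum_smul]
        simp only [smul_sub, Finset.sum_sub_distrib]
    _ ≤ ∑ b', w b' * ‖v b - v b'‖ := by
        refine (norm_sum_le _ _).trans_eq (Finset.sum_congr rfl fun b' _ => ?_)
        rw [norm_smul, Real.norm_of_nonneg (hw b')]
    _ = ∑ b' ∈ Finset.univ.erase b, w b' * ‖v b - v b'‖ :=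
        (Finset.sum_erase _ (by simp)).symm
    _ ≤ ∑ b' ∈ Finset.univ.erase b, w b' * (2 * B) :=
        Finset.sum_le_sum fun b' _ => mul_le_mul_of_nonneg_left (hdiff b') (hw b')
    _ = 2 * B * (∑ b, w b - w b) := by
        rw [← Finset.sum_mul, Finset.sum_erase_eq_sub (Finset.mem_univ b), mul_comm]

theorem mul_norm_sub_sq_le_mul_log (hw : ∀ b, 0 ≤ w b) (hv : ∀ b, ‖v b‖ ≤ B)
    (hm : (∑ b, w b) • m = ∑ b, w b • v b) (b : T) :
    w b * ‖v b - m‖ ^ 2 ≤ 2 * B ^ 2 * (w b * Real.log ((∑ b, w b) / w b)) := by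
  set W := ∑ b, w b
  rcases (hw b).eq_or_lt with h0 | hpos
  · simp [← h0]
  have hle : w b ≤ W := Finset.single_le_sum (fun b _ => hw b) (Finset.mem_univ b)
  have hW : 0 < W := hpos.trans_le hle
  have hnorm : ‖v b - m‖ ≤ 2 * B * (1 - w b / W) := by
    rw [← mul_le_mul_iff_of_pos_left hW]
    calc W * ‖v b - m‖ ≤ 2 * B * (W - w b) := sum_mul_norm_sub_le hw hv hm b
      _ = W * (2 * B * (1 - w b / W)) := by field_simp
  have hlog : Real.log (W / w b) = -Real.log (w b / W) := by rw [← Real.log_inv, inv_div]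
  calc w b * ‖v b - m‖ ^ 2 ≤ w b * (2 * B * (1 - w b / W)) ^ 2 := by gcongr
    _ = 2 * B ^ 2 * (w b * (2 * (1 - w b / W) ^ 2)) := by ring
    _ ≤ 2 * B ^ 2 * (w b * Real.log (W / w b)) := by
        rw [hlog]
        gcongr
        exact two_mul_one_sub_sq_le_neg_log (div_pos hpos hW) ((div_le_one hW).2 hle)

end WeightedMean

section Fibers

variable {Ω γ E : Type*} [MeasurableSpace Ω] [MeasurableSpace γ] [MeasurableSingletonClass γ]
  [Fintype γ] [NormedAddCommGroup E] {μ : Measure Ω} {X : Ω → γ}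

theorem integral_eq_sum_setIntegral_preimage_singleton [NormedSpace ℝ E] (hX : Measurable X)
    {f : Ω → E} (hf : Integrable f μ) : ∫ ω, f ω ∂μ = ∑ b, ∫ ω in X ⁻¹' {b}, f ω ∂μ := by
  rw [← integral_iUnion_fintype (fun b => hX (measurableSet_singleton b))
    (fun b b' hbb' => (Set.disjoint_singleton.2 hbb').preimage X) fun b => hf.integrableOn,
    ← Set.preimage_iUnion, Set.iUnion_of_singleton, Set.preimage_univ, Measure.restrict_univ]

variable [IsFiniteMeasure μ]

theorem sum_measureReal_inter_preimage_singleton (hX : Measurable X) (s : Set Ω) :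
    ∑ b, μ.real (s ∩ X ⁻¹' {b}) = μ.real s := by
  have := sum_measureReal_preimage_singleton (μ := μ.restrict s) Finset.univ
    fun b _ => hX (measurableSet_singleton b)
  simpa [measureReal_restrict_apply (hX (measurableSet_singleton _)), Set.inter_comm] using this

theorem integrable_comp_of_fintype (hX : Measurable X) (G : γ → E) :
    Integrable (fun ω => G (X ω)) μ :=
  Integrable.of_finite.comp_measurable hX

theorem integral_comp_eq_sum_measureReal_smul [NormedSpace ℝ E] [CompleteSpace E]
    (hX : Measurable X) (G : γ → E) :
    ∫ ω, G (X ω) ∂μ = ∑ b, μ.real (X ⁻¹' {b}) • G b := by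
  rw [← integral_map hX.aemeasurable StronglyMeasurable.of_discrete.aestronglyMeasurable,
    integral_fintype Integrable.of_finite]
  simp_rw [map_measureReal_apply hX (measurableSet_singleton _)]

end Fibers

section CondMean

variable {Ω E : Type*} [MeasurableSpace Ω] [NormedAddCommGroup E] [NormedSpace ℝ E]
  {μ : Measure Ω}

theorem measureReal_smul_integral_cond [IsFiniteMeasure μ] (s : Set Ω) (f : Ω → E) :
    μ.real s • ∫ ω, f ω ∂μ[|s] = ∫ ω in s, f ω ∂μ := by
  by_cases hs : μ s = 0
  · simp [Measure.restrict_eq_zero.2 hs, measureReal_def, hs]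
  · rw [ProbabilityTheory.cond, integral_smul_measure, smul_smul, ENNReal.toReal_inv,
      ← measureReal_def, mul_inv_cancel₀ ((measureReal_ne_zero_iff (measure_ne_top μ s)).2 hs),
      one_smul]

theorem norm_integral_cond_le {f : Ω → E} {B : ℝ} (hB : 0 ≤ B) (hf : ∀ᵐ ω ∂μ, ‖f ω‖ ≤ B)
    (s : Set Ω) : ‖∫ ω, f ω ∂μ[|s]‖ ≤ B :=
  (norm_integral_le_of_norm_le_const (cond_absolutelyContinuous.ae_le hf)).trans
    (mul_le_of_le_one_right hB measureReal_le_one)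

/-- `h` says that `Z` and `s` are conditionally independent given `t`. -/
theorem setIntegral_inter_eq_measureReal_smul_integral_cond [IsFiniteMeasure μ]
    [MeasurableSpace E] [BorelSpace E] [SecondCountableTopology E] {Z : Ω → E}
    (hZ : Measurable Z) {s t : Set Ω}
    (h : ∀ A, MeasurableSet A → μ (Z ⁻¹' A ∩ t ∩ s) * μ t = μ (Z ⁻¹' A ∩ t) * μ (t ∩ s)) :
    ∫ ω in t ∩ s, Z ω ∂μ = μ.real (t ∩ s) • ∫ ω, Z ω ∂μ[|t] := by
  by_cases ht : μ t = 0
  · have hts : μ (t ∩ s) = 0 := measure_mono_null Set.inter_subset_left ht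
    simp [Measure.restrict_eq_zero.2 hts, measureReal_def, hts]
  have hmap : μ t • (μ.restrict (t ∩ s)).map Z = μ (t ∩ s) • (μ.restrict t).map Z := by
    ext A hA
    simp only [Measure.smul_apply, smul_eq_mul, Measure.map_apply hZ hA,
      Measure.restrict_apply (hZ hA), ← Set.inter_assoc]
    rw [mul_comm, h A hA, mul_comm]
  have hintegrals := congrArg (fun ν => ∫ z, z ∂ν) hmap
  have hmap_integral : ∀ r, ∫ z, z ∂(μ.restrict r).map Z = ∫ ω in r, Z ω ∂μ := fun r =>
    integral_map (f := fun z => z) hZ.aemeasurable aestronglyMeasurable_id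
  simp only [integral_smul_measure, hmap_integral] at hintegrals
  rw [← measureReal_smul_integral_cond t Z, smul_comm] at hintegrals
  exact smul_right_injective E ((measureReal_ne_zero_iff (measure_ne_top μ t)).2 ht) hintegrals

end CondMean

theorem sum_measureReal_smul_integral_cond_of_markov {Ω S T E : Type*} [MeasurableSpace Ω]
    {μ : Measure Ω} [IsFiniteMeasure μ] [MeasurableSpace T] [MeasurableSingletonClass T]
    [Fintype T] [NormedAddCommGroup E] [NormedSpace ℝ E] [MeasurableSpace E] [BorelSpace E]
    [SecondCountableTopology E] {X : Ω → S} {Y : Ω → T} (hY : Measurable Y) {Z : Ω → E}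
    (hZ : Measurable Z) (hZi : Integrable Z μ)
    (hMarkov : ∀ A, MeasurableSet A → ∀ a b,
      μ (Z ⁻¹' A ∩ Y ⁻¹' {b} ∩ X ⁻¹' {a}) * μ (Y ⁻¹' {b})
        = μ (Z ⁻¹' A ∩ Y ⁻¹' {b}) * μ (Y ⁻¹' {b} ∩ X ⁻¹' {a})) (a : S) :
    (∑ b, μ.real (X ⁻¹' {a} ∩ Y ⁻¹' {b})) • ∫ ω, Z ω ∂μ[|X ⁻¹' {a}]
      = ∑ b, μ.real (X ⁻¹' {a} ∩ Y ⁻¹' {b}) • ∫ ω, Z ω ∂μ[|Y ⁻¹' {b}] := by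
  rw [sum_measureReal_inter_preimage_singleton hY, measureReal_smul_integral_cond,
    integral_eq_sum_setIntegral_preimage_singleton hY hZi.restrict]
  refine Finset.sum_congr rfl fun b _ => ?_
  rw [Measure.restrict_restrict (hY (measurableSet_singleton b)),
    setIntegral_inter_eq_measureReal_smul_integral_cond hZ (hMarkov · · a b), Set.inter_comm]

section DiscreteConditioning

variable {Ω S T E : Type*} [MeasureSpace Ω] [IsFiniteMeasure (ℙ : Measure Ω)]
  [MeasurableSpace S] [MeasurableSingletonClass S] [Fintype S]
  [MeasurableSpace T] [MeasurableSingletonClass T] [Fintype T]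
  [NormedAddCommGroup E] [NormedSpace ℝ E] [CompleteSpace E] {X : Ω → S} {Y : Ω → T}

theorem ce_ae_eq_integral_cond (hX : Measurable X) {f : Ω → E} (hf : Integrable f) :
    ce X f =ᵐ[ℙ] fun ω => ∫ y, f y ∂ℙ[|X ⁻¹' {X ω}] := by
  set G : S → E := fun a => ∫ y, f y ∂ℙ[|X ⁻¹' {a}]
  refine (ae_eq_condExp_of_forall_setIntegral_eq hX.comap_le hf
    (fun _ _ _ => (integrable_comp_of_fintype hX G).integrableOn) ?_
    ((StronglyMeasurable.of_discrete (f := G)).comp_measurable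
      (comap_measurable X)).aestronglyMeasurable).symm
  rintro _ ⟨t, -, rfl⟩ -
  rw [integral_comp_eq_sum_measureReal_smul hX G,
    integral_eq_sum_setIntegral_preimage_singleton hX hf.restrict]
  refine Finset.sum_congr rfl fun a _ => ?_
  rw [measureReal_restrict_apply (hX (measurableSet_singleton a)),
    Measure.restrict_restrict (hX (measurableSet_singleton a)), ← Set.preimage_inter]
  by_cases ha : a ∈ t
  · rw [Set.singleton_inter_of_mem ha]
    exact measureReal_smul_integral_cond _ f
  · simp [Set.singleton_inter_of_notMem ha]

theorem integral_norm_ce_sub_ce_sq (hX : Measurable X) (hY : Measurable Y) {f : Ω → E}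
    (hf : Integrable f) :
    ∫ ω, ‖ce Y f ω - ce X f ω‖ ^ 2 ∂ℙ = ∑ a, ∑ b, (ℙ : Measure Ω).real (X ⁻¹' {a} ∩ Y ⁻¹' {b}) *
      ‖∫ y, f y ∂ℙ[|Y ⁻¹' {b}] - ∫ y, f y ∂ℙ[|X ⁻¹' {a}]‖ ^ 2 := by
  calc ∫ ω, ‖ce Y f ω - ce X f ω‖ ^ 2 ∂ℙ
      = ∫ ω, ‖∫ y, f y ∂ℙ[|Y ⁻¹' {Y ω}] - ∫ y, f y ∂ℙ[|X ⁻¹' {X ω}]‖ ^ 2 ∂ℙ := by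
        refine integral_congr_ae ?_
        filter_upwards [ce_ae_eq_integral_cond hY hf, ce_ae_eq_integral_cond hX hf]
          with ω hYω hXω
        rw [hYω, hXω]
    _ = ∑ x : S × T, (ℙ : Measure Ω).real ((fun ω => (X ω, Y ω)) ⁻¹' {x}) •
          ‖∫ y, f y ∂ℙ[|Y ⁻¹' {x.2}] - ∫ y, f y ∂ℙ[|X ⁻¹' {x.1}]‖ ^ 2 :=
        integral_comp_eq_sum_measureReal_smul (hX.prodMk hY) fun x =>
          ‖∫ y, f y ∂ℙ[|Y ⁻¹' {x.2}] - ∫ y, f y ∂ℙ[|X ⁻¹' {x.1}]‖ ^ 2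
    _ = _ := by
        simp_rw [Fintype.sum_prod_type, ← Set.singleton_prod_singleton, Set.mk_preimage_prod,
          smul_eq_mul]

end DiscreteConditioning

theorem stmt_17_general {Ω S T : Type*} [MeasureSpace Ω] [IsProbabilityMeasure (ℙ : Measure Ω)]
    [Fintype S] [MeasurableSpace S] [MeasurableSingletonClass S]
    [Fintype T] [MeasurableSpace T] [MeasurableSingletonClass T]
    {d : ℕ} (Xprev : Ω → S) (Xcur : Ω → T)
    (hXp : Measurable Xprev) (hXc : Measurable Xcur)
    (Z : Ω → EuclideanSpace ℝ (Fin d)) (hZm : Measurable Z)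
    (B : ℝ) (hB0 : 0 < B) (hB : ∀ᵐ ω ∂ℙ, ‖Z ω‖ ≤ B)
    (hMarkov : ∀ (A : Set (EuclideanSpace ℝ (Fin d))), MeasurableSet A → ∀ (a : S) (b : T),
      ℙ (Z ⁻¹' A ∩ Xcur ⁻¹' {b} ∩ Xprev ⁻¹' {a}) * ℙ (Xcur ⁻¹' {b})
        = ℙ (Z ⁻¹' A ∩ Xcur ⁻¹' {b}) * ℙ (Xcur ⁻¹' {b} ∩ Xprev ⁻¹' {a}))
    (ε : ℝ)
    (hH : ∑ a : S, ∑ b : T,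
        (ℙ (Xprev ⁻¹' {a} ∩ Xcur ⁻¹' {b})).toReal *
          Real.log ((ℙ (Xprev ⁻¹' {a})).toReal
            / (ℙ (Xprev ⁻¹' {a} ∩ Xcur ⁻¹' {b})).toReal) < ε) :
    ∫ ω, ‖ce Xcur Z ω - ce Xprev Z ω‖ ^ 2 ∂ℙ < 2 * B ^ 2 * ε := by
  have hZ : Integrable Z ℙ := ⟨hZm.aestronglyMeasurable, HasFiniteIntegral.of_bounded hB⟩
  calc ∫ ω, ‖ce Xcur Z ω - ce Xprev Z ω‖ ^ 2 ∂ℙ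
      ≤ ∑ a, ∑ b, 2 * B ^ 2 * ((ℙ : Measure Ω).real (Xprev ⁻¹' {a} ∩ Xcur ⁻¹' {b}) *
          Real.log ((∑ b, (ℙ : Measure Ω).real (Xprev ⁻¹' {a} ∩ Xcur ⁻¹' {b}))
            / (ℙ : Measure Ω).real (Xprev ⁻¹' {a} ∩ Xcur ⁻¹' {b}))) := by
        rw [integral_norm_ce_sub_ce_sq hXp hXc hZ]
        exact Finset.sum_le_sum fun a _ => Finset.sum_le_sum fun b _ =>
          mul_norm_sub_sq_le_mul_log (fun _ => measureReal_nonneg)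
            (fun _ => norm_integral_cond_le hB0.le hB _)
            (sum_measureReal_smul_integral_cond_of_markov hXc hZm hZ hMarkov a) b
    _ = 2 * B ^ 2 * ∑ a, ∑ b, (ℙ (Xprev ⁻¹' {a} ∩ Xcur ⁻¹' {b})).toReal *
          Real.log ((ℙ (Xprev ⁻¹' {a})).toReal / (ℙ (Xprev ⁻¹' {a} ∩ Xcur ⁻¹' {b})).toReal) := by
        simp_rw [sum_measureReal_inter_preimage_singleton hXc, Finset.mul_sum]
        rfl
    _ < 2 * B ^ 2 * ε := by gcongr

/-- Informational ε-redundancy implies functional (2B²ε)-redundancy: `Xprev = X_{ℓ-1}` and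
`Xcur = X_ℓ` are discrete (finitely supported) random variables, `Z` is an `ℝᵈ`-valued random
vector with `‖Z‖ ≤ B` a.s. (where `0 < B`), `X_{ℓ-1} — X_ℓ — Z` is a Markov chain (stated
multiplicatively), and the conditional Shannon entropy `H(X_ℓ | X_{ℓ-1})` (in nats, written
out as a finite sum) is less than `ε`. Then
`E[‖E[Z|X_ℓ] − E[Z|X_{ℓ-1}]‖²] < 2B²ε`. -/
theorem stmt_17 {Ω S T : Type*} [MeasureSpace Ω] [IsProbabilityMeasure (ℙ : Measure Ω)]
    [Fintype S] [MeasurableSpace S] [MeasurableSingletonClass S]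
    [Fintype T] [MeasurableSpace T] [MeasurableSingletonClass T]
    {d : ℕ} (Xprev : Ω → S) (Xcur : Ω → T)
    (hXp : Measurable Xprev) (hXc : Measurable Xcur)
    (Z : Ω → EuclideanSpace ℝ (Fin d)) (hZm : Measurable Z)
    (B : ℝ) (hB0 : 0 < B) (hB : ∀ᵐ ω ∂ℙ, ‖Z ω‖ ≤ B)
    (hMarkov : ∀ (A : Set (EuclideanSpace ℝ (Fin d))), MeasurableSet A → ∀ (a : S) (b : T),
      ℙ (Z ⁻¹' A ∩ Xcur ⁻¹' {b} ∩ Xprev ⁻¹' {a}) * ℙ (Xcur ⁻¹' {b})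
        = ℙ (Z ⁻¹' A ∩ Xcur ⁻¹' {b}) * ℙ (Xcur ⁻¹' {b} ∩ Xprev ⁻¹' {a}))
    (ε : ℝ) (hε : 0 < ε)
    (hH : ∑ a : S, ∑ b : T,
        (ℙ (Xprev ⁻¹' {a} ∩ Xcur ⁻¹' {b})).toReal *
          Real.log ((ℙ (Xprev ⁻¹' {a})).toReal
            / (ℙ (Xprev ⁻¹' {a} ∩ Xcur ⁻¹' {b})).toReal) < ε) :
    ∫ ω, ‖ce Xcur Z ω - ce Xprev Z ω‖ ^ 2 ∂ℙ < 2 * B ^ 2 * ε :=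
  stmt_17_general Xprev Xcur hXp hXc Z hZm B hB0 hB hMarkov ε hH
end
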